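/- Let s₁,s₂ ≥ 1, 1 ≤ m ≤ min(s₁,s₂), r = s₁+s₂-2m, δ = r+1, d_i = s_i+1, and let τ₀ ∈ M_{d₂}⊗M_{d₁} be the Clebsch–Gordan highest weight vector of the δ-dimensional summand. Embedding M_{d₂}⊗M_{d₁} into M₂^{⊗s₂}⊗M₂^{⊗s₁} via e_l ↦ θ_l and applying the m middle trivial projections followed by the identification of the highest summand of M₂^{⊗r} with M_δ, one obtains C(m; s₁,s₂) · e₀^{(δ)}, where C(m;s₁,s₂) = [s₁-m]_q![s₂-m]_q![s₁+s₂-m+1]_q! / ([2]_q^m [s₁]_q![s₂]_q![s₁+s₂-2m+1]_q!) ≠ 0. -/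

import Mathlib

/-!
Induction on `m`. Peeling the last tensorand of the left block and the first tensorand of the
right block of `θ_a ⊗ θ_b` shows that one contraction at the interface sends it to a combination
of `θ_a ⊗ θ_{b-1}` and `θ_{a-1} ⊗ θ_b`. Hence it sends the embedded Clebsch–Gordan vector for
`(m+1; s₁+1, s₂+1)` to a multiple of the one for `(m; s₁, s₂)`: in each coefficient the two
contributions combine, by `q^A [B] + q^{-B} [A] = [A+B]`, into
`[s₁+s₂-m+2] / ([2] [s₁+1] [s₂+1])`, which is `C(m+1; s₁+1, s₂+1) / C(m; s₁, s₂)`.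
For `m = 0` the vector is `e₀ ⊗ e₀` and `C = 1`.
-/

noncomputable section
open Finset

/-- `q` is a nonzero complex number that is not a root of unity. -/
def NotRootOfUnity (q : ℂ) : Prop := q ≠ 0 ∧ ∀ m : ℤ, m ≠ 0 → q ^ m ≠ 1

/-- The q-integer `[m]_q = (q^m - q^(-m))/(q - q⁻¹)`. -/
def qint (q : ℂ) (m : ℤ) : ℂ := (q ^ m - q ^ (-m)) / (q - q⁻¹)

/-- The q-factorial `[n]_q! = ∏_{m=1}^n [m]_q`. -/
def qfact (q : ℂ) (n : ℕ) : ℂ := ∏ m ∈ Finset.range n, qint q ((m : ℤ) + 1)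

/-- Coefficient model of the tensor power `M₂^{⊗s}` of the two-dimensional irreducible
`U_q(sl₂)`-module: a vector is the coefficient function of the basis
`e_{l₁} ⊗ ⋯ ⊗ e_{l_s}` (index `0` is the leftmost tensorand). -/
abbrev V (s : ℕ) := (Fin s → Fin 2) → ℂ

/-- The highest weight vector `e₀ ⊗ ⋯ ⊗ e₀` of `M₂^{⊗s}`. -/
def e0 (s : ℕ) : V s := fun m => if ∀ i, m i = 0 then 1 else 0

/-- Action of `F` on `M₂^{⊗s}` via `Δ^(s)(F) = ∑ᵢ (K⁻¹)^{⊗(i-1)} ⊗ F ⊗ 1^{⊗(s-i)}`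
(the first coproduct leg acts on the leftmost tensorand;
`F.e₀ = e₁`, `F.e₁ = 0`, `K⁻¹.e_l = q^{2l-1} e_l` in `M₂`). -/
def Fop (q : ℂ) (s : ℕ) (v : V s) : V s :=
  fun m => ∑ i : Fin s,
    (∏ j : Fin s, if j < i then q ^ (2 * ((m j : ℕ) : ℤ) - 1) else 1) *
      (if m i = 1 then v (Function.update m i 0) else 0)

/-- Action of `E` on `M₂^{⊗s}` via `Δ^(s)(E) = ∑ᵢ 1^{⊗(i-1)} ⊗ E ⊗ K^{⊗(s-i)}`
(`E.e₁ = e₀`, `E.e₀ = 0`, `K.e_l = q^{1-2l} e_l` in `M₂`). -/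
def Eop (q : ℂ) (s : ℕ) (v : V s) : V s :=
  fun m => ∑ i : Fin s,
    (∏ j : Fin s, if i < j then q ^ (1 - 2 * ((m j : ℕ) : ℤ)) else 1) *
      (if m i = 0 then v (Function.update m i 1) else 0)

/-- Action of `K` on `M₂^{⊗s}` (diagonal: `K.e_l = q^{1-2l} e_l` in each tensorand). -/
def Kop (q : ℂ) (s : ℕ) (v : V s) : V s :=
  fun m => (∏ j : Fin s, q ^ (1 - 2 * ((m j : ℕ) : ℤ))) * v m

/-- The vector `θ_k^(s) = F^k.(e₀ ⊗ ⋯ ⊗ e₀)` in `M₂^{⊗s}`. -/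
def theta (q : ℂ) (s k : ℕ) : V s := (Fop q s)^[k] (e0 s)

/-- Insert the values `a`, `b` at (0-indexed) positions `j`, `j+1` into the multi-index `m`. -/
def insert2 (s j : ℕ) (m : Fin (s - 2) → Fin 2) (a b : Fin 2) : Fin s → Fin 2 :=
  fun i =>
    if (i : ℕ) < j then (if h : (i : ℕ) < s - 2 then m ⟨i, h⟩ else 0)
    else if (i : ℕ) = j then a
    else if (i : ℕ) = j + 1 then b
    else (if h : (i : ℕ) - 2 < s - 2 then m ⟨(i : ℕ) - 2, h⟩ else 0)

/-- Matrix coefficients of the `U_q(sl₂)`-equivariant projection `π̂^(1) : M₂ ⊗ M₂ → ℂ`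
onto the trivial summand (normalized so that the Clebsch–Gordan singlet maps to `1`):
`π̂(e₀⊗e₀) = π̂(e₁⊗e₁) = 0`, `π̂(e₀⊗e₁) = (q⁻¹-q)/[2]_q`, `π̂(e₁⊗e₀) = (1-q⁻²)/[2]_q`
(the first argument is the left tensorand). -/
def pival (q : ℂ) (a b : Fin 2) : ℂ :=
  if a = 0 ∧ b = 1 then (q⁻¹ - q) / qint q 2
  else if a = 1 ∧ b = 0 then (1 - q ^ (-2 : ℤ)) / qint q 2
  else 0

/-- The projection `π̂_j^(1) : M₂^{⊗s} → M₂^{⊗(s-2)}` contracting the tensorands at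
(0-indexed) positions `j`, `j+1` with `π̂^(1)`. -/
def pihat (q : ℂ) (s j : ℕ) (v : V s) : V (s - 2) :=
  fun m => ∑ a : Fin 2, ∑ b : Fin 2, pival q a b * v (insert2 s j m a b)

/-- The tensor product map `M₂^{⊗s₂} ⊗ M₂^{⊗s₁} → M₂^{⊗(s₂+s₁)}` (left block first). -/
def tens {s₂ s₁ : ℕ} (v : V s₂) (w : V s₁) : V (s₂ + s₁) :=
  fun m => v (fun i => m (Fin.castAdd s₁ i)) * w (fun i => m (Fin.natAdd s₂ i))

/-- Transport of vectors along an equality of the number of tensor factors. -/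
def reindex {n n' : ℕ} (h : n = n') (v : V n) : V n' :=
  fun m => v (fun i => m (Fin.cast h i))

/-- `t` successive middle projections: at each step the projection `π̂^(1)` contracts the
two tensorands adjacent to the interface of the two blocks (the interface moves one
step to the left in the left block after each contraction). -/
def pihatIter (q : ℂ) : (t : ℕ) → (s j : ℕ) → V s → V (s - 2 * t)
  | 0, _, _, v => v
  | (t + 1), s, j, v => reindex (by omega) (pihatIter q t (s - 2) (j - 1) (pihat q s j v))

/-- The image under the embedding `I^{(s₂)} ⊗ I^{(s₁)} : M_{d₂} ⊗ M_{d₁} ↪ M₂^{⊗s₂} ⊗ M₂^{⊗s₁}`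
(`e_l ↦ θ_l`) of the Clebsch–Gordan highest weight vector
`τ₀ = ∑_{l₁+l₂=m} (-1)^{l₁} ([s₁-l₁]![s₂-l₂]!)/([l₁]![s₁]![l₂]![s₂]!)
  q^{l₁(s₁-l₁+1)} (q-q⁻¹)^{-m} (e_{l₂} ⊗ e_{l₁})`. -/
def tau0emb (q : ℂ) (s₁ s₂ m : ℕ) : V (s₂ + s₁) :=
  fun mm => ∑ l₁ ∈ Finset.range (m + 1),
    ((-1) ^ l₁ * (qfact q (s₁ - l₁) * qfact q (s₂ - (m - l₁))) /
        (qfact q l₁ * qfact q s₁ * qfact q (m - l₁) * qfact q s₂) *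
        (q ^ (l₁ * (s₁ - l₁ + 1)) / (q - q⁻¹) ^ m)) *
      tens (theta q s₂ (m - l₁)) (theta q s₁ l₁) mm

/-- The constant `C(m; s₁, s₂)`. -/
def Cconst (q : ℂ) (m s₁ s₂ : ℕ) : ℂ :=
  qfact q (s₁ - m) * qfact q (s₂ - m) * qfact q (s₁ + s₂ - m + 1) /
    (qint q 2 ^ m * qfact q s₁ * qfact q s₂ * qfact q (s₁ + s₂ - 2 * m + 1))

variable {q : ℂ}

lemma zpow_sum₀ (h0 : q ≠ 0) {ι : Type*} (t : Finset ι) (f : ι → ℤ) :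
    q ^ (∑ i ∈ t, f i) = ∏ i ∈ t, q ^ f i := by
  classical
  induction t using Finset.induction_on with
  | empty => simp
  | insert i t hi ih => rw [Finset.sum_insert hi, Finset.prod_insert hi, zpow_add₀ h0, ih]

lemma NotRootOfUnity.sub_inv_ne_zero (hq : NotRootOfUnity q) : q - q⁻¹ ≠ 0 := by
  intro h
  refine hq.2 2 two_ne_zero ?_
  rw [sub_eq_zero] at h
  calc q ^ (2 : ℤ) = q * q := by rw [zpow_two]
    _ = 1 := by nth_rewrite 2 [h]; exact mul_inv_cancel₀ hq.1

lemma qint_ne_zero (hq : NotRootOfUnity q) {n : ℤ} (hn : n ≠ 0) : qint q n ≠ 0 := by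
  refine div_ne_zero (fun h => hq.2 (2 * n) (by omega) ?_) hq.sub_inv_ne_zero
  rw [sub_eq_zero] at h
  rw [two_mul, zpow_add₀ hq.1]
  nth_rewrite 1 [h]
  rw [← zpow_add₀ hq.1, neg_add_cancel, zpow_zero]

lemma qint_natCast_add_one_ne_zero (hq : NotRootOfUnity q) (n : ℕ) : qint q ((n : ℤ) + 1) ≠ 0 :=
  qint_ne_zero hq (by omega)

lemma qint_zero : qint q 0 = 0 := by simp [qint]

lemma qint_one (hq : NotRootOfUnity q) : qint q 1 = 1 := by
  simpa [qint] using div_self hq.sub_inv_ne_zero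

lemma qint_add (h0 : q ≠ 0) (A B : ℤ) :
    q ^ A * qint q B + q ^ (-B) * qint q A = qint q (A + B) := by
  simp only [qint, mul_div_assoc', ← add_div, zpow_add₀ h0, zpow_neg]
  ring

lemma qint_succ_mul_zpow (hq : NotRootOfUnity q) (k e : ℤ) :
    qint q (k + 1) * q ^ e = qint q k * q ^ (e - 1) + q ^ (k + e) := by
  rw [← qint_add hq.1 k 1, qint_one hq, zpow_sub₀ hq.1, zpow_add₀ hq.1, zpow_neg_one, zpow_one]
  ring

lemma qfact_zero : qfact q 0 = 1 := Finset.prod_range_zero _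

lemma qfact_succ (n : ℕ) : qfact q (n + 1) = qfact q n * qint q ((n : ℤ) + 1) :=
  Finset.prod_range_succ _ n

lemma qfact_ne_zero (hq : NotRootOfUnity q) (n : ℕ) : qfact q n ≠ 0 :=
  Finset.prod_ne_zero_iff.mpr fun n _ => qint_natCast_add_one_ne_zero hq n

def numOnes {s : ℕ} (m : Fin s → Fin 2) : ℕ := ∑ i, (m i : ℕ)

lemma numOnes_update_add_one {s : ℕ} (m : Fin s → Fin 2) (i : Fin s) (h : m i = 1) :
    numOnes (Function.update m i 0) + 1 = numOnes m := by
  have hcomp : (fun j => ((Function.update m i 0 j : Fin 2) : ℕ)) =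
      Function.update (fun j => (m j : ℕ)) i 0 := by
    funext j
    rcases eq_or_ne j i with rfl | hj <;> simp [*]
  rw [numOnes, hcomp, Finset.sum_update_of_mem (Finset.mem_univ i), numOnes,
    ← Finset.add_sum_erase _ _ (Finset.mem_univ i), h, Finset.sdiff_singleton_eq_erase]
  simp [add_comm]

lemma Fop_smul (s : ℕ) (c : ℂ) (v : V s) : Fop q s (c • v) = c • Fop q s v := by
  funext m
  simp only [Fop, Pi.smul_apply, smul_eq_mul, Finset.mul_sum]
  refine Finset.sum_congr rfl fun i _ => ?_
  split_ifs <;> ring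

lemma Fop_cons (s : ℕ) (v : V (s + 1)) (a : Fin 2) (m : Fin s → Fin 2) :
    Fop q (s + 1) v (Fin.cons a m) =
      (if a = 1 then v (Fin.cons 0 m) else 0) +
        q ^ (2 * ((a : ℕ) : ℤ) - 1) * Fop q s (fun x => v (Fin.cons a x)) m := by
  simp only [Fop, Fin.sum_univ_succ, Fin.prod_univ_succ, Fin.not_lt_zero, if_false,
    Finset.prod_const_one, one_mul, Fin.cons_zero, Fin.cons_succ, Fin.succ_pos, if_true,
    Fin.succ_lt_succ_iff, Fin.update_cons_zero, ← Fin.cons_update, Finset.mul_sum, mul_assoc]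

lemma Fop_snoc (h0 : q ≠ 0) (s : ℕ) (v : V (s + 1)) (a : Fin 2) (m : Fin s → Fin 2) :
    Fop q (s + 1) v (Fin.snoc m a) =
      Fop q s (fun x => v (Fin.snoc x a)) m +
        q ^ (2 * (numOnes m : ℤ) - s) * (if a = 1 then v (Fin.snoc m 0) else 0) := by
  have hexp : 2 * (numOnes m : ℤ) - s = ∑ j, (2 * ((m j : ℕ) : ℤ) - 1) := by
    simp [numOnes, Finset.sum_sub_distrib, Finset.mul_sum]
  simp only [Fop, Fin.sum_univ_castSucc, Fin.prod_univ_castSucc, Fin.snoc_castSucc,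
    Fin.snoc_last, Fin.castSucc_lt_castSucc_iff, Fin.castSucc_lt_last, if_true,
    lt_irrefl, if_false, mul_one, (Fin.castSucc_lt_last _).asymm, Fin.update_snoc_last,
    ← Fin.snoc_update, hexp, zpow_sum₀ h0]

lemma theta_succ (s k : ℕ) : theta q s (k + 1) = Fop q s (theta q s k) :=
  Function.iterate_succ_apply' _ _ _

-- At `k = 0` the truncated `k - 1` is harmless: both sides carry the factor `[0]_q = 0`.
lemma qint_mul_Fop_theta_pred (s k : ℕ) (m : Fin s → Fin 2) :
    qint q k * Fop q s (theta q s (k - 1)) m = qint q k * theta q s k m := by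
  cases k with
  | zero => simp [qint_zero]
  | succ k => rw [Nat.add_sub_cancel, theta_succ]

lemma theta_eq_zero_of_numOnes_ne {s k : ℕ} {m : Fin s → Fin 2} (h : numOnes m ≠ k) :
    theta q s k m = 0 := by
  induction k generalizing m with
  | zero =>
    simp only [theta, Function.iterate_zero, id, e0, ite_eq_right_iff, one_ne_zero, imp_false]
    exact fun hall => h (by simp [numOnes, hall])
  | succ k ih =>
    rw [theta_succ]
    refine Finset.sum_eq_zero fun i _ => ?_
    split_ifs with hi
    · rw [ih (by have := numOnes_update_add_one m i hi; omega), mul_zero]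
    · rw [mul_zero]

lemma e0_cons (s : ℕ) (a : Fin 2) (m : Fin s → Fin 2) :
    e0 (s + 1) (Fin.cons a m) = if a = 0 then e0 s m else 0 := by
  by_cases ha : a = 0 <;> simp [e0, Fin.forall_fin_succ, ha]

lemma e0_snoc (s : ℕ) (a : Fin 2) (m : Fin s → Fin 2) :
    e0 (s + 1) (Fin.snoc m a) = if a = 0 then e0 s m else 0 := by
  by_cases ha : a = 0 <;> simp [e0, Fin.forall_fin_succ', ha]

lemma theta_cons (hq : NotRootOfUnity q) (s k : ℕ) (a : Fin 2) (m : Fin s → Fin 2) :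
    theta q (s + 1) k (Fin.cons a m) =
      if a = 0 then q ^ (-(k : ℤ)) * theta q s k m else qint q k * theta q s (k - 1) m := by
  induction k generalizing a m with
  | zero => simp [theta, e0_cons, qint_zero]
  | succ k ih =>
    have hfun : ∀ a, (fun x => theta q (s + 1) k (Fin.cons a x)) =
        if a = 0 then q ^ (-(k : ℤ)) • theta q s k else qint q k • theta q s (k - 1) := by
      intro a; funext x; rw [ih]; split_ifs <;> rfl
    rw [theta_succ, Fop_cons, hfun]
    fin_cases a
    · simp only [Fin.zero_eta, Fin.isValue, zero_ne_one, if_false, if_true, Fop_smul,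
        ← theta_succ, Pi.smul_apply, smul_eq_mul, zero_add]
      rw [← mul_assoc, ← zpow_add₀ hq.1]
      push_cast; ring_nf
    · simp only [Fin.mk_one, Fin.isValue, if_true, one_ne_zero, if_false, Fop_smul, ih,
        Pi.smul_apply, smul_eq_mul]
      rw [qint_mul_Fop_theta_pred, Nat.add_sub_cancel,
        show ((k + 1 : ℕ) : ℤ) = 1 + k by push_cast; ring, ← qint_add hq.1, qint_one hq]
      norm_num; ring

lemma theta_snoc (hq : NotRootOfUnity q) (s k : ℕ) (a : Fin 2) (m : Fin s → Fin 2) :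
    theta q (s + 1) k (Fin.snoc m a) =
      if a = 0 then theta q s k m
      else qint q k * q ^ ((k : ℤ) - 1 - s) * theta q s (k - 1) m := by
  induction k generalizing a m with
  | zero => simp [theta, e0_snoc, qint_zero]
  | succ k ih =>
    have hfun : ∀ a, (fun x => theta q (s + 1) k (Fin.snoc x a)) =
        if a = 0 then theta q s k else (qint q k * q ^ ((k : ℤ) - 1 - s)) • theta q s (k - 1) := by
      intro a; funext x; rw [ih]; split_ifs <;> rfl
    rw [theta_succ, Fop_snoc hq.1, hfun]
    fin_cases a
    · simp [← theta_succ]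
    · simp only [Fin.mk_one, Fin.isValue, if_true, one_ne_zero, if_false, Fop_smul, ih,
        Pi.smul_apply, smul_eq_mul, Nat.add_sub_cancel]
      rw [mul_right_comm, qint_mul_Fop_theta_pred]
      by_cases hm : numOnes m = k
      · rw [hm, Nat.cast_succ, add_sub_cancel_right, qint_succ_mul_zpow hq,
          show 2 * (k : ℤ) - s = k + (k - s) by ring, sub_right_comm]
        ring
      · simp [theta_eq_zero_of_numOnes_ne hm]

lemma pihat_apply (s j : ℕ) (v : V s) (mm : Fin (s - 2) → Fin 2) :
    pihat q s j v mm = (q⁻¹ - q) / qint q 2 * v (insert2 s j mm 0 1) +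
      (1 - q ^ (-2 : ℤ)) / qint q 2 * v (insert2 s j mm 1 0) := by
  simp [pihat, pival, Fin.sum_univ_two]

section Interface

variable (t₁ t₂ : ℕ) (mm : Fin ((t₂ + 1) + (t₁ + 1) - 2) → Fin 2) (a b : Fin 2)

lemma insert2_castAdd :
    (fun i => insert2 ((t₂ + 1) + (t₁ + 1)) t₂ mm a b (Fin.castAdd (t₁ + 1) i)) =
      Fin.snoc (fun i => mm (Fin.cast (by omega) (Fin.castAdd t₁ i))) a := by
  funext i
  refine Fin.lastCases ?_ (fun i => ?_) i
  · simp [insert2]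
  · have := i.isLt
    simp only [insert2, Fin.snoc_castSucc, Fin.val_castAdd, Fin.val_castSucc]
    split_ifs <;> first | rfl | omega

lemma insert2_natAdd :
    (fun i => insert2 ((t₂ + 1) + (t₁ + 1)) t₂ mm a b (Fin.natAdd (t₂ + 1) i)) =
      Fin.cons b (fun i => mm (Fin.cast (by omega) (Fin.natAdd t₂ i))) := by
  funext i
  refine Fin.cases ?_ (fun i => ?_) i
  · simp [insert2]
  · have := i.isLt
    simp only [insert2, Fin.cons_succ, Fin.val_natAdd, Fin.val_succ]
    split_ifs <;> first | rfl | omega | exact congrArg mm (Fin.ext (by simp; omega))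

end Interface

lemma pihat_tens_theta (hq : NotRootOfUnity q) (t₁ t₂ a b : ℕ) :
    pihat q ((t₂ + 1) + (t₁ + 1)) t₂ (tens (theta q (t₂ + 1) a) (theta q (t₁ + 1) b)) =
      reindex (by omega : t₂ + t₁ = (t₂ + 1) + (t₁ + 1) - 2)
        (((q⁻¹ - q) / qint q 2 * qint q b) • tens (theta q t₂ a) (theta q t₁ (b - 1)) +
          ((1 - q ^ (-2 : ℤ)) / qint q 2 * (qint q a * q ^ ((a : ℤ) - 1 - t₂) * q ^ (-(b : ℤ)))) •
            tens (theta q t₂ (a - 1)) (theta q t₁ b)) := by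
  funext mm
  rw [pihat_apply]
  simp only [tens, insert2_castAdd, insert2_natAdd, theta_snoc hq, theta_cons hq]
  simp [reindex, tens]
  ring

def cgCoeff (q : ℂ) (s₁ s₂ m l : ℕ) : ℂ :=
  (-1) ^ l * (qfact q (s₁ - l) * qfact q (s₂ - (m - l))) /
      (qfact q l * qfact q s₁ * qfact q (m - l) * qfact q s₂) *
    (q ^ (l * (s₁ - l + 1)) / (q - q⁻¹) ^ m)

lemma cgCoeff_succ_succ_succ_succ (hq : NotRootOfUnity q) (l u w v : ℕ) :
    cgCoeff q (l + u + 1) (l + w + v + 1) (l + w + 1) (l + 1) =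
      -(q ^ (u + 1) * qint q ((l + v : ℕ) + 1)) /
          (qint q (l + 1) * qint q ((l + u : ℕ) + 1) * qint q ((l + w + v : ℕ) + 1) *
            (q - q⁻¹)) *
        cgCoeff q (l + u) (l + w + v) (l + w) l := by
  have hD := hq.sub_inv_ne_zero
  simp only [cgCoeff, show l + u + 1 - (l + 1) = u by omega, show l + w + 1 - (l + 1) = w by omega,
    show l + w + v + 1 - w = l + v + 1 by omega, show l + u - l = u by omega,
    show l + w - l = w by omega, show l + w + v - w = l + v by omega, qfact_succ]
  have := qfact_ne_zero hq
  have := qint_natCast_add_one_ne_zero hq l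
  have := qint_natCast_add_one_ne_zero hq (l + u)
  have := qint_natCast_add_one_ne_zero hq (l + w + v)
  generalize q - q⁻¹ = D at hD ⊢
  field_simp
  ring

lemma cgCoeff_succ_succ_succ (hq : NotRootOfUnity q) (l u w v : ℕ) :
    cgCoeff q (l + u + 1) (l + w + v + 1) (l + w + 1) l =
      q ^ l * qint q ((u : ℤ) + 1) /
          (qint q ((l + u : ℕ) + 1) * qint q ((w : ℤ) + 1) * qint q ((l + w + v : ℕ) + 1) *
            (q - q⁻¹)) *
        cgCoeff q (l + u) (l + w + v) (l + w) l := by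
  have hD := hq.sub_inv_ne_zero
  simp only [cgCoeff, show l + u + 1 - l = u + 1 by omega, show l + w + 1 - l = w + 1 by omega,
    show l + w + v + 1 - (w + 1) = l + v by omega, show l + u - l = u by omega,
    show l + w - l = w by omega, show l + w + v - w = l + v by omega, qfact_succ]
  have := qfact_ne_zero hq
  have := qint_natCast_add_one_ne_zero hq w
  have := qint_natCast_add_one_ne_zero hq (l + u)
  have := qint_natCast_add_one_ne_zero hq (l + w + v)
  generalize q - q⁻¹ = D at hD ⊢
  field_simp
  ring

def contractFactor (q : ℂ) (t₁ t₂ n : ℕ) : ℂ :=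
  qint q ((t₁ : ℤ) + t₂ - n + 2) / (qint q 2 * qint q ((t₁ : ℤ) + 1) * qint q ((t₂ : ℤ) + 1))

lemma cgCoeff_contract (hq : NotRootOfUnity q) {t₁ t₂ n l : ℕ} (hl : l ≤ n) (h₁ : n ≤ t₁)
    (h₂ : n ≤ t₂) :
    cgCoeff q (t₁ + 1) (t₂ + 1) (n + 1) (l + 1) *
        ((q⁻¹ - q) / qint q 2 * qint q ((l + 1 : ℕ) : ℤ)) +
      cgCoeff q (t₁ + 1) (t₂ + 1) (n + 1) l *
        ((1 - q ^ (-2 : ℤ)) / qint q 2 *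
          (qint q ((n + 1 - l : ℕ) : ℤ) * q ^ (((n + 1 - l : ℕ) : ℤ) - 1 - t₂) * q ^ (-(l : ℤ)))) =
      contractFactor q t₁ t₂ n * cgCoeff q t₁ t₂ n l := by
  obtain ⟨u, rfl⟩ : ∃ u, t₁ = l + u := ⟨t₁ - l, by omega⟩
  obtain ⟨w, rfl⟩ : ∃ w, n = l + w := ⟨n - l, by omega⟩
  obtain ⟨v, rfl⟩ : ∃ v, t₂ = l + w + v := ⟨t₂ - (l + w), by omega⟩
  rw [cgCoeff_succ_succ_succ_succ hq, cgCoeff_succ_succ_succ hq, contractFactor,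
    show l + w + 1 - l = w + 1 by omega,
    show ((l + u : ℕ) : ℤ) + (l + w + v : ℕ) - (l + w : ℕ) + 2 = (u + 1 : ℕ) + ((l + v : ℕ) + 1) by
      push_cast; ring,
    ← qint_add hq.1 ((u + 1 : ℕ) : ℤ),
    show ((w + 1 : ℕ) : ℤ) - 1 - (l + w + v : ℕ) = -((l + v : ℕ) : ℤ) by push_cast; ring,
    show -(((l + v : ℕ) : ℤ) + 1) = -((l + v + 1 : ℕ) : ℤ) by push_cast; ring,
    show (-2 : ℤ) = -((2 : ℕ) : ℤ) by rfl]
  simp only [zpow_neg, zpow_natCast]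
  have h0 := hq.1
  rw [show q⁻¹ - q = -(q - q⁻¹) by ring, show 1 - (q ^ 2)⁻¹ = q⁻¹ * (q - q⁻¹) by field_simp]
  have hD := hq.sub_inv_ne_zero
  have := qint_ne_zero hq two_ne_zero
  have := qint_natCast_add_one_ne_zero hq l
  have := qint_natCast_add_one_ne_zero hq w
  have := qint_natCast_add_one_ne_zero hq (l + u)
  have := qint_natCast_add_one_ne_zero hq (l + w + v)
  generalize q - q⁻¹ = D at hD ⊢
  push_cast at *
  field_simp
  ring

def pihatLinearMap (q : ℂ) (s j : ℕ) : V s →ₗ[ℂ] V (s - 2) where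
  toFun := pihat q s j
  map_add' v w := by
    funext mm
    simp [pihat, mul_add, Finset.sum_add_distrib]
  map_smul' c v := by
    funext mm
    simp only [pihat, Pi.smul_apply, smul_eq_mul, RingHom.id_apply, Finset.mul_sum, mul_left_comm]

def reindexLinearMap {n n' : ℕ} (h : n = n') : V n →ₗ[ℂ] V n' :=
  LinearMap.funLeft ℂ ℂ fun m i => m (Fin.cast h i)

lemma tau0emb_eq_sum (s₁ s₂ m : ℕ) :
    tau0emb q s₁ s₂ m =
      ∑ l ∈ range (m + 1), cgCoeff q s₁ s₂ m l • tens (theta q s₂ (m - l)) (theta q s₁ l) := by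
  funext mm
  simp [tau0emb, cgCoeff, Finset.sum_apply]

lemma pihat_tau0emb_succ (hq : NotRootOfUnity q) {t₁ t₂ n : ℕ} (h₁ : n ≤ t₁) (h₂ : n ≤ t₂) :
    pihat q ((t₂ + 1) + (t₁ + 1)) t₂ (tau0emb q (t₁ + 1) (t₂ + 1) (n + 1)) =
      reindex (by omega) (contractFactor q t₁ t₂ n • tau0emb q t₁ t₂ n) := by
  have hpi : pihat q ((t₂ + 1) + (t₁ + 1)) t₂ = pihatLinearMap q _ t₂ := rfl
  have hre : reindex (by omega : t₂ + t₁ = (t₂ + 1) + (t₁ + 1) - 2) = reindexLinearMap _ := rfl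
  rw [tau0emb_eq_sum, tau0emb_eq_sum, hpi, map_sum]
  simp only [map_smul]
  rw [← hpi]
  simp only [pihat_tens_theta hq, hre, ← map_smul, ← map_sum]
  congr 1
  simp only [smul_add, smul_smul, Finset.sum_add_distrib, Finset.smul_sum]
  -- the `l = 0` term of the first sum and the `l = n + 1` term of the second carry `[0]_q = 0`
  rw [Finset.sum_range_succ' _ (n + 1), Finset.sum_range_succ _ (n + 1)]
  simp only [Nat.cast_zero, qint_zero, mul_zero, zero_mul, zero_smul, add_zero, Nat.sub_self]
  rw [← Finset.sum_add_distrib]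
  refine Finset.sum_congr rfl fun l hl => ?_
  have hl : l ≤ n := Nat.lt_succ_iff.mp (Finset.mem_range.mp hl)
  rw [show n + 1 - (l + 1) = n - l by omega, Nat.add_sub_cancel,
    show n + 1 - l - 1 = n - l by omega, ← add_smul, cgCoeff_contract hq hl h₁ h₂]

lemma pihatIter_smul (c : ℂ) (t s j : ℕ) (v : V s) :
    pihatIter q t s j (c • v) = c • pihatIter q t s j v := by
  induction t generalizing s j v with
  | zero => rfl
  | succ t ih =>
    change reindex _ (pihatIter q t _ _ (pihatLinearMap q s j (c • v))) = _
    rw [map_smul, ih]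
    rfl

lemma pihatIter_reindex (t : ℕ) {n n' : ℕ} (h : n = n') (j : ℕ) (v : V n) :
    pihatIter q t n' j (reindex h v) = reindex (by omega) (pihatIter q t n j v) := by
  subst h
  rfl

lemma reindex_smul {n n' : ℕ} (h : n = n') (c : ℂ) (v : V n) :
    reindex h (c • v) = c • reindex h v :=
  rfl

lemma reindex_e0 {n n' : ℕ} (h : n = n') : reindex h (e0 n) = e0 n' := by
  subst h
  rfl

lemma tens_e0 (s₂ s₁ : ℕ) : tens (e0 s₂) (e0 s₁) = e0 (s₂ + s₁) := by
  funext mm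
  simp only [tens, e0, ite_mul, one_mul, zero_mul, Fin.forall_fin_add]
  by_cases h₂ : ∀ i, mm (Fin.castAdd s₁ i) = 0 <;> by_cases h₁ : ∀ i, mm (Fin.natAdd s₂ i) = 0 <;>
    simp [h₁, h₂]

lemma tau0emb_zero (hq : NotRootOfUnity q) (s₁ s₂ : ℕ) : tau0emb q s₁ s₂ 0 = e0 (s₂ + s₁) := by
  have := qfact_ne_zero hq
  simp [tau0emb_eq_sum, cgCoeff, qfact_zero, theta, tens_e0, div_self, this]

lemma Cconst_zero (hq : NotRootOfUnity q) (s₁ s₂ : ℕ) : Cconst q 0 s₁ s₂ = 1 := by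
  have := qfact_ne_zero hq
  simp [Cconst, this]

lemma Cconst_ne_zero (hq : NotRootOfUnity q) (m s₁ s₂ : ℕ) : Cconst q m s₁ s₂ ≠ 0 := by
  have := qfact_ne_zero hq
  have := qint_ne_zero hq two_ne_zero
  simp [Cconst, *]

lemma contractFactor_mul_Cconst (hq : NotRootOfUnity q) {t₁ t₂ n : ℕ} (h₁ : n ≤ t₁)
    (h₂ : n ≤ t₂) :
    contractFactor q t₁ t₂ n * Cconst q n t₁ t₂ = Cconst q (n + 1) (t₁ + 1) (t₂ + 1) := by
  obtain ⟨u, rfl⟩ : ∃ u, t₁ = n + u := ⟨t₁ - n, by omega⟩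
  obtain ⟨v, rfl⟩ : ∃ v, t₂ = n + v := ⟨t₂ - n, by omega⟩
  simp only [contractFactor, Cconst, show n + u - n = u by omega, show n + v - n = v by omega,
    show n + u + (n + v) - n + 1 = n + u + v + 1 by omega,
    show n + u + (n + v) - 2 * n + 1 = u + v + 1 by omega,
    show n + u + 1 - (n + 1) = u by omega, show n + v + 1 - (n + 1) = v by omega,
    show n + u + 1 + (n + v + 1) - (n + 1) + 1 = n + u + v + 1 + 1 by omega,
    show n + u + 1 + (n + v + 1) - 2 * (n + 1) + 1 = u + v + 1 by omega,
    show ((n + u : ℕ) : ℤ) + (n + v : ℕ) - n + 2 = (n + u + v + 1 : ℕ) + 1 by push_cast; ring,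
    qfact_succ, pow_succ]
  have := qfact_ne_zero hq
  have := qint_ne_zero hq two_ne_zero
  have := qint_natCast_add_one_ne_zero hq (n + u)
  have := qint_natCast_add_one_ne_zero hq (n + v)
  have := qint_natCast_add_one_ne_zero hq (n + u + v + 1)
  field_simp

lemma pihatIter_tau0emb (hq : NotRootOfUnity q) (m : ℕ) :
    ∀ s₁ s₂, m ≤ s₁ → m ≤ s₂ →
      pihatIter q m (s₂ + s₁) (s₂ - 1) (tau0emb q s₁ s₂ m) =
        Cconst q m s₁ s₂ • e0 (s₂ + s₁ - 2 * m) := by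
  induction m with
  | zero => intro s₁ s₂ _ _; rw [Cconst_zero hq, one_smul, tau0emb_zero hq]; rfl
  | succ n ih =>
    rintro (_ | t₁) (_ | t₂) h₁ h₂
    all_goals try omega
    change reindex _ (pihatIter q n _ (t₂ - 1) (pihat q _ t₂ _)) = _
    rw [pihat_tau0emb_succ hq (by omega) (by omega), pihatIter_reindex, pihatIter_smul,
      ih t₁ t₂ (by omega) (by omega), smul_smul, contractFactor_mul_Cconst hq (by omega) (by omega),
      reindex_smul, reindex_smul, reindex_e0, reindex_e0]

theorem iterated_middle_projection_of_CG_vector_general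
    (q : ℂ) (hq : NotRootOfUnity q) (s₁ s₂ : ℕ)
    (m : ℕ) (hm₁ : m ≤ s₁) (hm₂ : m ≤ s₂) :
    pihatIter q m (s₂ + s₁) (s₂ - 1) (tau0emb q s₁ s₂ m)
        = (fun mm => Cconst q m s₁ s₂ * e0 (s₂ + s₁ - 2 * m) mm) ∧
      Cconst q m s₁ s₂ ≠ 0 :=
  ⟨pihatIter_tau0emb hq m s₁ s₂ hm₁ hm₂, Cconst_ne_zero hq m s₁ s₂⟩

/-- Applying the `m` middle trivial projections to the embedded Clebsch–Gordan highest
weight vector of the `δ`-dimensional summand (`δ = s₁+s₂-2m+1`) yields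
`C(m;s₁,s₂) · e₀^{(δ)}`, where the resulting vector of `M₂^{⊗r}` (`r = s₁+s₂-2m`) lies in
the top summand `M_δ` and `e₀^{(δ)}` is identified with `θ₀^{(r)} = e₀^{⊗r}`;
moreover `C(m;s₁,s₂) ≠ 0`. -/
theorem iterated_middle_projection_of_CG_vector
    (q : ℂ) (hq : NotRootOfUnity q) (s₁ s₂ : ℕ) (hs₁ : 1 ≤ s₁) (hs₂ : 1 ≤ s₂)
    (m : ℕ) (hm : 1 ≤ m) (hm₁ : m ≤ s₁) (hm₂ : m ≤ s₂) :
    pihatIter q m (s₂ + s₁) (s₂ - 1) (tau0emb q s₁ s₂ m)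
        = (fun mm => Cconst q m s₁ s₂ * e0 (s₂ + s₁ - 2 * m) mm) ∧
      Cconst q m s₁ s₂ ≠ 0 :=
  iterated_middle_projection_of_CG_vector_general q hq s₁ s₂ m hm₁ hm₂
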